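/- Let d ≥ 2 be an integer and define θ : ℝ≥0 → ℝ by θ(0) = 0, θ(x) = −x·log_d(x/d) for 0 < x ≤ 1/2, and θ(x) = 1 for x > 1/2; define g(α) = √(α(1−α))/(√α + √(1−α)) for α ∈ (0,1). Let 0 < r₀ ≤ r₁ < 1, let G = min over α ∈ [r₀,r₁] of g(α)²/(1−α), and let K > 0. Then G > 0 and the infimum over ε ∈ [0,2] of G·ε²/K + max{γ − θ(ε), 0} is strictly positive for every γ > 0. -/

import Mathlib

/- STATEMENT 19 (positivity of the joint-attack exponent E₂(γ,r₀,r₁)):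
   G = min_{α∈[r₀,r₁]} g(α)²/(1−α) > 0 and
   inf_{0≤ε≤2} [G·ε²/K + |γ−θ(ε)|⁺] > 0 for every γ > 0. -/

open scoped BigOperators

noncomputable section

/-- The continuity-of-entropy modulus `θ`: `θ(0)=0`, `θ(x) = −x·log_d(x/d)` for
`0 < x ≤ 1/2`, and `θ(x)=1` for `x > 1/2`. -/
def theta (d : ℕ) (x : ℝ) : ℝ :=
  if x = 0 then 0 else if x ≤ 1 / 2 then -x * Real.logb d (x / d) else 1

/-- `g(α) = √(α(1−α))/(√α+√(1−α))`. -/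
def gfun (α : ℝ) : ℝ :=
  Real.sqrt (α * (1 - α)) / (Real.sqrt α + Real.sqrt (1 - α))

lemma neg_log_le (x : ℝ) (hx : 0 < x) : -Real.log x ≤ 2 / Real.sqrt x := by
  have hs : 0 < Real.sqrt x := Real.sqrt_pos.mpr hx
  have h1 : Real.log (1 / Real.sqrt x) ≤ 1 / Real.sqrt x - 1 :=
    Real.log_le_sub_one_of_pos (by positivity)
  have h2 : Real.log (1 / Real.sqrt x) = -(1/2) * Real.log x := by
    rw [Real.log_div one_ne_zero hs.ne', Real.log_one, Real.log_sqrt hx.le]; ring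
  have h3 : 2 / Real.sqrt x = 2 * (1 / Real.sqrt x) := by ring
  rw [h2] at h1
  linarith [h3, hs]

lemma theta_small (d : ℕ) (hd : 2 ≤ d) (ε : ℝ) (h0 : 0 < ε) (h1 : ε ≤ 1/2) :
    theta d ε ≤ 5 * Real.sqrt ε := by
  have hd1 : (1:ℝ) < d := by exact_mod_cast Nat.lt_of_lt_of_le one_lt_two hd
  have hld : (1:ℝ)/2 ≤ Real.log d := by
    have h2 : Real.log 2 ≤ Real.log d := by
      apply Real.log_le_log (by norm_num); exact_mod_cast hd
    nlinarith [Real.log_two_gt_d9]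
  have hldpos : 0 < Real.log d := lt_of_lt_of_le (by norm_num) hld
  have hs : 0 < Real.sqrt ε := Real.sqrt_pos.mpr h0
  have hsle1 : Real.sqrt ε ≤ 1 := by
    rw [show (1:ℝ) = Real.sqrt 1 by simp]
    exact Real.sqrt_le_sqrt (by linarith)
  have hεs : ε ≤ Real.sqrt ε := by
    nlinarith [Real.sq_sqrt h0.le]
  have hform : theta d ε = ε + ε * (-Real.log ε) / Real.log d := by
    unfold theta
    rw [if_neg h0.ne', if_pos h1, Real.logb,
      Real.log_div h0.ne' (by positivity : (d:ℝ) ≠ 0)]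
    field_simp
    ring
  rw [hform]
  have hkey : -Real.log ε ≤ 2 / Real.sqrt ε := neg_log_le ε h0
  have h4 : ε * (-Real.log ε) ≤ 2 * Real.sqrt ε := by
    have := mul_le_mul_of_nonneg_left hkey h0.le
    calc ε * (-Real.log ε) ≤ ε * (2 / Real.sqrt ε) := this
      _ = 2 * (ε / Real.sqrt ε) := by ring
      _ = 2 * Real.sqrt ε := by rw [Real.div_sqrt]
  have h5 : ε * (-Real.log ε) / Real.log d ≤ 2 * Real.sqrt ε / (1/2) := by
    apply div_le_div₀ (by positivity) h4 (by norm_num) hld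
  have : 2 * Real.sqrt ε / (1/2) = 4 * Real.sqrt ε := by ring
  linarith [this ▸ h5]

theorem stmt_19 (d : ℕ) (hd : 2 ≤ d) (r₀ r₁ : ℝ) (hr0 : 0 < r₀) (hr01 : r₀ ≤ r₁)
    (hr1 : r₁ < 1) (K : ℝ) (hK : 0 < K) :
    0 < sInf {v : ℝ | ∃ α, r₀ ≤ α ∧ α ≤ r₁ ∧ v = gfun α ^ 2 / (1 - α)} ∧
    ∀ γ : ℝ, 0 < γ →
      0 < sInf {v : ℝ | ∃ ε, 0 ≤ ε ∧ ε ≤ 2 ∧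
        v = sInf {u : ℝ | ∃ α, r₀ ≤ α ∧ α ≤ r₁ ∧ u = gfun α ^ 2 / (1 - α)} * ε ^ 2 / K +
          max (γ - theta d ε) 0} := by
  set F : ℝ → ℝ := fun α => gfun α ^ 2 / (1 - α) with hF
  set S : Set ℝ := {v : ℝ | ∃ α, r₀ ≤ α ∧ α ≤ r₁ ∧ v = gfun α ^ 2 / (1 - α)} with hSdef
  have hmem : ∀ α ∈ Set.Icc r₀ r₁, 0 < α ∧ α < 1 := fun α hα =>
    ⟨lt_of_lt_of_le hr0 hα.1, lt_of_le_of_lt hα.2 hr1⟩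
  have hFpos : ∀ α ∈ Set.Icc r₀ r₁, 0 < F α := by
    intro α hα
    obtain ⟨h0, h1⟩ := hmem α hα
    have hnum : 0 < Real.sqrt (α * (1 - α)) := Real.sqrt_pos.mpr (by nlinarith)
    have hden : 0 < Real.sqrt α + Real.sqrt (1 - α) := by
      have := Real.sqrt_pos.mpr h0; positivity
    have hg : 0 < gfun α := div_pos hnum hden
    exact div_pos (by positivity) (by linarith)
  have hcont : ContinuousOn F (Set.Icc r₀ r₁) := by
    have hden : ∀ α ∈ Set.Icc r₀ r₁, Real.sqrt α + Real.sqrt (1 - α) ≠ 0 := by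
      intro α hα
      obtain ⟨h0, h1⟩ := hmem α hα
      have := Real.sqrt_pos.mpr h0
      have : 0 < Real.sqrt α + Real.sqrt (1 - α) := by positivity
      exact this.ne'
    have hg : ContinuousOn gfun (Set.Icc r₀ r₁) := by
      apply ContinuousOn.div
      · exact (Real.continuous_sqrt.comp (continuous_id.mul (continuous_const.sub continuous_id))).continuousOn
      · exact (Real.continuous_sqrt.add (Real.continuous_sqrt.comp (continuous_const.sub continuous_id))).continuousOn
      · exact hden
    apply ContinuousOn.div (hg.pow 2) (continuous_const.sub continuous_id).continuousOn
    intro α hα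
    have := (hmem α hα).2
    intro h; simp only [Pi.sub_apply, id_eq] at h; linarith [sub_eq_zero.mp h]
  have hIcc : (Set.Icc r₀ r₁).Nonempty := ⟨r₀, le_refl _, hr01⟩
  obtain ⟨α₀, hα₀, hmin⟩ := isCompact_Icc.exists_isMinOn hIcc hcont
  have hSne : S.Nonempty := ⟨F r₀, r₀, le_refl _, hr01, rfl⟩
  have hlow : ∀ v ∈ S, F α₀ ≤ v := by
    rintro v ⟨α, h1, h2, rfl⟩
    exact hmin ⟨h1, h2⟩
  have hGge : F α₀ ≤ sInf S := le_csInf hSne hlow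
  have hGpos : 0 < sInf S := lt_of_lt_of_le (hFpos α₀ hα₀) hGge
  refine ⟨hGpos, ?_⟩
  intro γ hγ
  set G := sInf S with hG
  set δ : ℝ := min ((γ/10)^2) (1/2) with hδ
  have hδpos : 0 < δ := lt_min (by positivity) (by norm_num)
  have hθle : ∀ ε : ℝ, 0 ≤ ε → ε ≤ δ → theta d ε ≤ γ / 2 := by
    intro ε h0 h1
    rcases eq_or_lt_of_le h0 with h | h
    · rw [← h]; simp only [theta, if_pos rfl]; positivity
    · have hε2 : ε ≤ 1/2 := le_trans h1 (min_le_right _ _)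
      have := theta_small d hd ε h hε2
      have hsq : Real.sqrt ε ≤ γ/10 := by
        rw [show γ/10 = Real.sqrt ((γ/10)^2) by
          rw [Real.sqrt_sq (by positivity)]]
        exact Real.sqrt_le_sqrt (le_trans h1 (min_le_left _ _))
      calc theta d ε ≤ 5 * Real.sqrt ε := this
        _ ≤ 5 * (γ/10) := by linarith
        _ = γ/2 := by ring
  set c : ℝ := min (γ/2) (G * δ^2 / K) with hc
  have hcpos : 0 < c := lt_min (by positivity) (by positivity)
  set T : Set ℝ := {v : ℝ | ∃ ε, 0 ≤ ε ∧ ε ≤ 2 ∧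
    v = G * ε ^ 2 / K + max (γ - theta d ε) 0} with hT
  have hTne : T.Nonempty := ⟨G * 0 ^ 2 / K + max (γ - theta d 0) 0, 0, le_refl _, by norm_num, rfl⟩
  have hTlow : ∀ v ∈ T, c ≤ v := by
    rintro v ⟨ε, h0, h2, rfl⟩
    rcases le_or_gt ε δ with hle | hgt
    · have h1 : γ/2 ≤ max (γ - theta d ε) 0 :=
        le_max_of_le_left (by linarith [hθle ε h0 hle])
      have : 0 ≤ G * ε ^ 2 / K := by positivity
      calc c ≤ γ/2 := min_le_left _ _
        _ ≤ G * ε ^ 2 / K + max (γ - theta d ε) 0 := by linarith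
    · have h1 : G * δ ^ 2 / K ≤ G * ε ^ 2 / K := by
        have hδε : δ ≤ ε := hgt.le
        have : δ ^ 2 ≤ ε ^ 2 := by nlinarith
        have := mul_le_mul_of_nonneg_left this hGpos.le
        exact div_le_div_of_nonneg_right this hK.le
      calc c ≤ G * δ ^ 2 / K := min_le_right _ _
        _ ≤ G * ε ^ 2 / K := h1
        _ ≤ G * ε ^ 2 / K + max (γ - theta d ε) 0 :=
            le_add_of_nonneg_right (le_max_right _ _)
  exact lt_of_lt_of_le hcpos (le_csInf hTne hTlow)

end
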